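/- arXiv:2201.01221 — 6 statements merged into one kernel-verified Lean document; each statement's English description precedes it below -/
import Mathlib

section
/- Suppose there exist joint histories h₁ ≠ h₂ with ρ(h₁) > 0 and ρ(h₂) > 0 such that the conditional state distributions agree, i.e. ρ(s|h₁) = ρ(s|h₂) for every state s, and there exists a joint action a with Q_h(h₁,a) ≠ Q_h(h₂,a). Then the state value function is a biased estimator of the history value function: it is NOT the case that Q_h(h,a) = ∑_s ρ(s|h)·Q_s(s,a) holds for every joint history h with ρ(h) > 0. (This is the content of the paper's Theorem 1: the state value Q_s(s,a) may be a biased estimate of the history value Q_h(h,a).) -/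
open Finset

/-- History marginal `ρ(h) = ∑ₛ ρ(h,s)`. -/
noncomputable def rhoH {H S : Type*} [Fintype S] (ρ : H → S → ℝ) (h : H) : ℝ :=
  ∑ s, ρ h s

/-- State marginal `ρ(s) = ∑ₕ ρ(h,s)`. -/
noncomputable def rhoS {H S : Type*} [Fintype H] (ρ : H → S → ℝ) (s : S) : ℝ :=
  ∑ h, ρ h s

/-- Conditional state distribution `ρ(s|h) = ρ(h,s)/ρ(h)`. -/
noncomputable def condSH {H S : Type*} [Fintype S] (ρ : H → S → ℝ) (s : S) (h : H) : ℝ :=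
  ρ h s / rhoH ρ h

/-- Conditional history distribution `ρ(h|s) = ρ(h,s)/ρ(s)`. -/
noncomputable def condHS {H S : Type*} [Fintype H] (ρ : H → S → ℝ) (h : H) (s : S) : ℝ :=
  ρ h s / rhoS ρ s

/-- History value `Q_h(h,a) = ∑ₛ ρ(s|h)·Q(h,s,a)`. -/
noncomputable def Qhist {H S A : Type*} [Fintype S] (ρ : H → S → ℝ)
    (Q : H → S → A → ℝ) (h : H) (a : A) : ℝ :=
  ∑ s, condSH ρ s h * Q h s a

/-- State value `Q_s(s,a) = ∑ₕ ρ(h|s)·Q(h,s,a)`. -/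
noncomputable def Qstate {H S A : Type*} [Fintype H] (ρ : H → S → ℝ)
    (Q : H → S → A → ℝ) (s : S) (a : A) : ℝ :=
  ∑ h, condHS ρ h s * Q h s a

/-- **Theorem 1 (bias of state values).** If two distinct positive-probability joint
histories induce the same conditional state distribution but have different history
values for some joint action, then the state value function is a biased estimator of
the history value function. -/
theorem state_values_biased
    {H S A : Type*} [Fintype H] [Fintype S] [Fintype A]
    [Nonempty H] [Nonempty S] [Nonempty A]
    (ρ : H → S → ℝ) (hρ_nonneg : ∀ h s, 0 ≤ ρ h s)
    (hρ_sum : ∑ h, ∑ s, ρ h s = 1)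
    (Q : H → S → A → ℝ)
    (h₁ h₂ : H) (hne : h₁ ≠ h₂)
    (h₁pos : 0 < rhoH ρ h₁) (h₂pos : 0 < rhoH ρ h₂)
    (hcond : ∀ s, condSH ρ s h₁ = condSH ρ s h₂)
    (a : A) (hQne : Qhist ρ Q h₁ a ≠ Qhist ρ Q h₂ a) :
    ¬ (∀ h : H, 0 < rhoH ρ h → ∀ a' : A,
        Qhist ρ Q h a' = ∑ s, condSH ρ s h * Qstate ρ Q s a') := by
  intro hclaim
  apply hQne
  rw [hclaim h₁ h₁pos a, hclaim h₂ h₂pos a]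
  exact Finset.sum_congr rfl fun s _ => by rw [hcond s]
end

section
/- Assume the state value function is an unbiased estimator of the history value function, i.e. for every joint history h with ρ(h) > 0 and every joint action a, Q_h(h,a) = ∑_s ρ(s|h)·Q_s(s,a). Then the state-based single-sample policy gradient estimate has variance at least that of the history-based estimate: Var[X] ≥ Var[Y], where X(h,s,a) := Q_s(s,a)·g(h,a) and Y(h,s,a) := Q_h(h,a)·g(h,a), and variance is taken with respect to the joint distribution μ(h,s,a) = ρ(h,s)·π(h,a). (This is the paper's Theorem 2.) -/
open Finset

/-- Mean of a vector-valued estimate `Z` under the joint pmf `μ(h,s,a)`. -/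
noncomputable def pgMean {H S A : Type*} [Fintype H] [Fintype S] [Fintype A] {d : ℕ}
    (μ : H → S → A → ℝ) (Z : H → S → A → EuclideanSpace ℝ (Fin d)) :
    EuclideanSpace ℝ (Fin d) :=
  ∑ h, ∑ s, ∑ a, μ h s a • Z h s a

/-- Variance of a vector-valued estimate `Z` under the joint pmf `μ(h,s,a)`:
`Var[Z] = ∑ μ(h,s,a)·‖Z(h,s,a)‖² − ‖E[Z]‖²`. -/
noncomputable def pgVar {H S A : Type*} [Fintype H] [Fintype S] [Fintype A] {d : ℕ}
    (μ : H → S → A → ℝ) (Z : H → S → A → EuclideanSpace ℝ (Fin d)) : ℝ :=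
  (∑ h, ∑ s, ∑ a, μ h s a * ‖Z h s a‖ ^ 2) - ‖pgMean μ Z‖ ^ 2

/-- **Theorem 2 (variance of state-based gradient estimates).** If the state value
function is an unbiased estimator of the history value function, then the state-based
single-sample policy gradient estimate `X(h,s,a) = Q_s(s,a)·∇log π(a;h)` has variance
at least that of the history-based estimate `Y(h,s,a) = Q_h(h,a)·∇log π(a;h)`. -/
theorem state_gradient_variance_ge
    {H S A : Type*} [Fintype H] [Fintype S] [Fintype A]
    [Nonempty H] [Nonempty S] [Nonempty A]
    (ρ : H → S → ℝ) (hρ_nonneg : ∀ h s, 0 ≤ ρ h s)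
    (hρ_sum : ∑ h, ∑ s, ρ h s = 1)
    (Q : H → S → A → ℝ)
    (π : H → A → ℝ) (hπ_nonneg : ∀ h a, 0 ≤ π h a)
    (hπ_sum : ∀ h, ∑ a, π h a = 1)
    (d : ℕ) (g : H → A → EuclideanSpace ℝ (Fin d))
    (hunbiased : ∀ h : H, 0 < rhoH ρ h → ∀ a : A,
        Qhist ρ Q h a = ∑ s, condSH ρ s h * Qstate ρ Q s a) :
    pgVar (fun h s a => ρ h s * π h a)
        (fun h _s a => Qhist ρ Q h a • g h a) ≤
      pgVar (fun h s a => ρ h s * π h a)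
        (fun h s a => Qstate ρ Q s a • g h a) := by
  classical
  have hρh_nonneg : ∀ h, 0 ≤ rhoH ρ h :=
    fun h => Finset.sum_nonneg fun s _ => hρ_nonneg h s
  have hzero : ∀ h, rhoH ρ h = 0 → ∀ s, ρ h s = 0 := by
    intro h h0 s
    exact (Finset.sum_eq_zero_iff_of_nonneg (fun s _ => hρ_nonneg h s)).mp h0 s (mem_univ s)
  -- key identity for means
  have key : ∀ h a, ∑ s, ρ h s * Qstate ρ Q s a = rhoH ρ h * Qhist ρ Q h a := by
    intro h a
    rcases (hρh_nonneg h).lt_or_eq with hpos | h0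
    · rw [hunbiased h hpos a, Finset.mul_sum]
      refine Finset.sum_congr rfl fun s _ => ?_
      unfold condSH
      field_simp
    · rw [← h0, zero_mul]
      exact Finset.sum_eq_zero fun s _ => by rw [hzero h h0.symm s, zero_mul]
  -- key inequality for second moments
  have key2 : ∀ h a, rhoH ρ h * (Qhist ρ Q h a) ^ 2 ≤ ∑ s, ρ h s * (Qstate ρ Q s a) ^ 2 := by
    intro h a
    rcases (hρh_nonneg h).lt_or_eq with hpos | h0
    · have hcond_nonneg : ∀ s, 0 ≤ condSH ρ s h :=
        fun s => div_nonneg (hρ_nonneg h s) (hρh_nonneg h)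
      have hcond_sum : ∑ s, condSH ρ s h = 1 := by
        unfold condSH
        rw [← Finset.sum_div]
        exact div_self (ne_of_gt hpos)
      have cs := Finset.sum_mul_sq_le_sq_mul_sq Finset.univ
        (fun s => Real.sqrt (condSH ρ s h))
        (fun s => Real.sqrt (condSH ρ s h) * Qstate ρ Q s a)
      have hsq : ∀ s : S, Real.sqrt (condSH ρ s h) ^ 2 = condSH ρ s h :=
        fun s => Real.sq_sqrt (hcond_nonneg s)
      have e1 : ∀ s : S, Real.sqrt (condSH ρ s h) * (Real.sqrt (condSH ρ s h) * Qstate ρ Q s a)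
          = condSH ρ s h * Qstate ρ Q s a := by
        intro s
        rw [← mul_assoc, ← pow_two, hsq s]
      have e2 : ∀ s : S, (Real.sqrt (condSH ρ s h) * Qstate ρ Q s a) ^ 2
          = condSH ρ s h * Qstate ρ Q s a ^ 2 := by
        intro s
        rw [mul_pow, hsq]
      simp only [e1, e2, hsq, hcond_sum, one_mul] at cs
      have h1 : Qhist ρ Q h a ^ 2 ≤ ∑ s, condSH ρ s h * Qstate ρ Q s a ^ 2 := by
        rw [hunbiased h hpos a]; exact cs
      calc rhoH ρ h * Qhist ρ Q h a ^ 2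
          ≤ rhoH ρ h * ∑ s, condSH ρ s h * Qstate ρ Q s a ^ 2 :=
            mul_le_mul_of_nonneg_left h1 (hρh_nonneg h)
        _ = ∑ s, ρ h s * Qstate ρ Q s a ^ 2 := by
            rw [Finset.mul_sum]
            refine Finset.sum_congr rfl fun s _ => ?_
            unfold condSH
            field_simp
    · rw [← h0, zero_mul]
      exact Finset.sum_nonneg fun s _ => by
        rw [hzero h h0.symm s, zero_mul]
  -- means are equal
  have hmean : pgMean (fun h s a => ρ h s * π h a) (fun h _s a => Qhist ρ Q h a • g h a)
      = pgMean (fun h s a => ρ h s * π h a) (fun h s a => Qstate ρ Q s a • g h a) := by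
    unfold pgMean
    refine Finset.sum_congr rfl fun h _ => ?_
    rw [Finset.sum_comm, Finset.sum_comm (γ := S)]
    refine Finset.sum_congr rfl fun a _ => ?_
    have lhs : ∑ s, (ρ h s * π h a) • Qhist ρ Q h a • g h a
        = (rhoH ρ h * Qhist ρ Q h a * π h a) • g h a := by
      simp_rw [smul_smul]
      rw [← Finset.sum_smul]
      congr 1
      simp_rw [mul_assoc]
      rw [← Finset.sum_mul]
      unfold rhoH
      ring
    have rhs : ∑ s, (ρ h s * π h a) • Qstate ρ Q s a • g h a
        = (rhoH ρ h * Qhist ρ Q h a * π h a) • g h a := by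
      have : ∀ s, (ρ h s * π h a) • Qstate ρ Q s a • g h a
          = (ρ h s * Qstate ρ Q s a * π h a) • g h a := by
        intro s; rw [smul_smul, mul_right_comm]
      rw [Finset.sum_congr rfl fun s _ => this s, ← Finset.sum_smul]
      congr 1
      rw [← Finset.sum_mul, key h a]
    rw [lhs, rhs]
  -- conclude
  unfold pgVar
  rw [hmean]
  have hsm : ∑ h, ∑ s, ∑ a, (ρ h s * π h a) * ‖Qhist ρ Q h a • g h a‖ ^ 2
      ≤ ∑ h, ∑ s, ∑ a, (ρ h s * π h a) * ‖Qstate ρ Q s a • g h a‖ ^ 2 := by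
    refine Finset.sum_le_sum fun h _ => ?_
    rw [Finset.sum_comm, Finset.sum_comm (γ := S)]
    refine Finset.sum_le_sum fun a _ => ?_
    have norm_eq : ∀ (c : ℝ) (v : EuclideanSpace ℝ (Fin d)), ‖c • v‖ ^ 2 = c ^ 2 * ‖v‖ ^ 2 := by
      intro c v
      rw [norm_smul, mul_pow, Real.norm_eq_abs, sq_abs]
    have lhs : ∑ s, (ρ h s * π h a) * ‖Qhist ρ Q h a • g h a‖ ^ 2
        = (rhoH ρ h * Qhist ρ Q h a ^ 2) * (π h a * ‖g h a‖ ^ 2) := by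
      simp_rw [norm_eq]
      rw [← Finset.sum_mul, ← Finset.sum_mul]
      unfold rhoH
      ring
    have rhs : ∑ s, (ρ h s * π h a) * ‖Qstate ρ Q s a • g h a‖ ^ 2
        = (∑ s, ρ h s * Qstate ρ Q s a ^ 2) * (π h a * ‖g h a‖ ^ 2) := by
      rw [Finset.sum_mul]
      refine Finset.sum_congr rfl fun s _ => ?_
      rw [norm_eq]
      ring
    rw [lhs, rhs]
    exact mul_le_mul_of_nonneg_right (key2 h a)
      (mul_nonneg (hπ_nonneg h a) (sq_nonneg _))
  linarith
end

section
/- Assume π(h,a) > 0 for every pair (h,a) (full-support joint policy). Suppose there exist joint histories h₁ ≠ h₂ with ρ(h₁) > 0 and ρ(h₂) > 0 such that ρ(s|h₁) = ρ(s|h₂) for every state s, and a joint action a with Q_h(h₁,a) ≠ Q_h(h₂,a). Then the tabular-policy gradients computed with the history-based critic and with the state-based critic differ: defining, for each pair (h',a'), the gradient components G_h(h',a') := ∑_s ρ(h',s)·Q(h',s,a') and G_s(h',a') := ∑_s ρ(h',s)·Q_s(s,a'), there exists a pair (h',a') with G_h(h',a') ≠ G_s(h',a'). (This is the paper's Corollary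 1: the state-based policy gradient ∇J_s may be biased; for a tabular policy with one parameter per history-action pair, the (h,a)-component of the policy gradient with the history-based critic is ρ(h)·Q_h(h,a) = ∑_s ρ(h,s)·Q(h,s,a), and with the state-based critic it is ρ(h)·∑_s ρ(s|h)·Q_s(s,a) = ∑_s ρ(h,s)·Q_s(s,a).) -/
open Finset

/-- **Corollary 1 (bias of the state-based policy gradient).** For a full-support
tabular joint policy, if two distinct positive-probability joint histories induce the
same conditional state distribution but have different history values for some joint
action, then the tabular-policy gradients computed with the history-based critic,
`G_h(h',a') = ∑ₛ ρ(h',s)·Q(h',s,a')`, and with the state-based critic,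
`G_s(h',a') = ∑ₛ ρ(h',s)·Q_s(s,a')`, differ in some component. -/
theorem state_gradient_biased
    {H S A : Type*} [Fintype H] [Fintype S] [Fintype A]
    [Nonempty H] [Nonempty S] [Nonempty A]
    (ρ : H → S → ℝ) (hρ_nonneg : ∀ h s, 0 ≤ ρ h s)
    (hρ_sum : ∑ h, ∑ s, ρ h s = 1)
    (Q : H → S → A → ℝ)
    (π : H → A → ℝ) (hπ_pos : ∀ h a, 0 < π h a)
    (hπ_sum : ∀ h, ∑ a, π h a = 1)
    (h₁ h₂ : H) (hne : h₁ ≠ h₂)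
    (h₁pos : 0 < rhoH ρ h₁) (h₂pos : 0 < rhoH ρ h₂)
    (hcond : ∀ s, condSH ρ s h₁ = condSH ρ s h₂)
    (a : A) (hQne : Qhist ρ Q h₁ a ≠ Qhist ρ Q h₂ a) :
    ∃ (h' : H) (a' : A),
      (∑ s, ρ h' s * Q h' s a') ≠ (∑ s, ρ h' s * Qstate ρ Q s a') := by
  by_contra hc
  push_neg at hc
  have mul : ∀ (h : H), rhoH ρ h ≠ 0 → ∀ (X : S → ℝ),
      ∑ s, ρ h s * X s = rhoH ρ h * ∑ s, condSH ρ s h * X s := by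
    intro h hh X
    rw [Finset.mul_sum]
    refine Finset.sum_congr rfl fun s _ => ?_
    unfold condSH
    field_simp
  have key : ∀ (h : H), 0 < rhoH ρ h →
      Qhist ρ Q h a = ∑ s, condSH ρ s h * Qstate ρ Q s a := by
    intro h hh
    have e := hc h a
    rw [mul h hh.ne' (fun s => Q h s a), mul h hh.ne' (fun s => Qstate ρ Q s a)] at e
    have := mul_left_cancel₀ hh.ne' e
    unfold Qhist
    exact this
  apply hQne
  rw [key h₁ h₁pos, key h₂ h₂pos]
  exact Finset.sum_congr rfl fun s _ => by rw [hcond s]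
end

section
/- It is not possible for the state-based policy gradient estimate to be simultaneously unbiased and of strictly smaller variance than the history-based estimate: the conjunction of (i) for every joint history h with ρ(h) > 0 and every joint action a, Q_h(h,a) = ∑_s ρ(s|h)·Q_s(s,a), and (ii) Var[X] < Var[Y], is false, where X(h,s,a) := Q_s(s,a)·g(h,a) and Y(h,s,a) := Q_h(h,a)·g(h,a). (This is the formal content of the paper's Corollary 2: the state-based policy gradient estimate cannot have strictly better bias/variance properties than the history-based one.) -/
open Finset

private lemma jensen_sq {ι : Type*} [Fintype ι] (w x : ι → ℝ) (hw : ∀ i, 0 ≤ w i)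
    (hsum : ∑ i, w i = 1) : (∑ i, w i * x i) ^ 2 ≤ ∑ i, w i * x i ^ 2 := by
  have h := Finset.sum_mul_sq_le_sq_mul_sq Finset.univ
      (fun i => Real.sqrt (w i)) (fun i => Real.sqrt (w i) * x i)
  have e1 : ∀ i, Real.sqrt (w i) * (Real.sqrt (w i) * x i) = w i * x i := by
    intro i; rw [← mul_assoc, Real.mul_self_sqrt (hw i)]
  have e2 : ∀ i, Real.sqrt (w i) ^ 2 = w i := fun i => Real.sq_sqrt (hw i)
  have e3 : ∀ i, (Real.sqrt (w i) * x i) ^ 2 = w i * x i ^ 2 := by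
    intro i; rw [mul_pow, e2]
  simp only [e1, e2, e3, hsum, one_mul] at h
  exact h

/-- **Corollary 2.** The state-based policy gradient estimate cannot be simultaneously
unbiased and of strictly smaller variance than the history-based estimate, where
`X(h,s,a) = Q_s(s,a)·g(h,a)` and `Y(h,s,a) = Q_h(h,a)·g(h,a)`. -/
theorem state_gradient_no_free_lunch
    {H S A : Type*} [Fintype H] [Fintype S] [Fintype A]
    [Nonempty H] [Nonempty S] [Nonempty A]
    (ρ : H → S → ℝ) (hρ_nonneg : ∀ h s, 0 ≤ ρ h s)
    (hρ_sum : ∑ h, ∑ s, ρ h s = 1)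
    (Q : H → S → A → ℝ)
    (π : H → A → ℝ) (hπ_nonneg : ∀ h a, 0 ≤ π h a)
    (hπ_sum : ∀ h, ∑ a, π h a = 1)
    (d : ℕ) (g : H → A → EuclideanSpace ℝ (Fin d)) :
    ¬ ((∀ h : H, 0 < rhoH ρ h → ∀ a : A,
          Qhist ρ Q h a = ∑ s, condSH ρ s h * Qstate ρ Q s a) ∧
        pgVar (fun h s a => ρ h s * π h a)
            (fun h s a => Qstate ρ Q s a • g h a) <
          pgVar (fun h s a => ρ h s * π h a)
            (fun h _s a => Qhist ρ Q h a • g h a)) := by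
  rintro ⟨hunb, hvar⟩
  have hHnn : ∀ h, 0 ≤ rhoH ρ h := fun h => Finset.sum_nonneg fun s _ => hρ_nonneg h s
  have hzero : ∀ h, rhoH ρ h = 0 → ∀ s, ρ h s = 0 := by
    intro h hh s
    exact (Finset.sum_eq_zero_iff_of_nonneg (fun s _ => hρ_nonneg h s)).mp hh s (mem_univ s)
  have hcond_nn : ∀ h s, 0 ≤ condSH ρ s h :=
    fun h s => div_nonneg (hρ_nonneg h s) (hHnn h)
  have hcond_sum : ∀ h, 0 < rhoH ρ h → ∑ s, condSH ρ s h = 1 := by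
    intro h hh
    simp only [condSH, ← Finset.sum_div]
    exact div_self (ne_of_gt hh)
  -- key1 : mean identity
  have key1 : ∀ h a, ∑ s, ρ h s * Qstate ρ Q s a = ∑ s, ρ h s * Qhist ρ Q h a := by
    intro h a
    rcases (hHnn h).eq_or_lt with h0 | hpos
    · simp [hzero h h0.symm]
    · have hq := hunb h hpos a
      rw [← Finset.sum_mul]
      have : (∑ s, ρ h s) = rhoH ρ h := rfl
      rw [this, hq, Finset.mul_sum]
      refine Finset.sum_congr rfl fun s _ => ?_
      rw [condSH]
      field_simp
  -- key2 : second-moment inequality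
  have key2 : ∀ h a, ∑ s, ρ h s * Qhist ρ Q h a ^ 2 ≤ ∑ s, ρ h s * Qstate ρ Q s a ^ 2 := by
    intro h a
    rcases (hHnn h).eq_or_lt with h0 | hpos
    · simp [hzero h h0.symm]
    · have hq := hunb h hpos a
      have hj := jensen_sq (fun s => condSH ρ s h) (fun s => Qstate ρ Q s a)
        (fun s => hcond_nn h s) (hcond_sum h hpos)
      rw [← hq] at hj
      calc ∑ s, ρ h s * Qhist ρ Q h a ^ 2 = rhoH ρ h * Qhist ρ Q h a ^ 2 := by
            rw [← Finset.sum_mul]; rfl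
        _ ≤ rhoH ρ h * ∑ s, condSH ρ s h * Qstate ρ Q s a ^ 2 :=
            mul_le_mul_of_nonneg_left hj hpos.le
        _ = ∑ s, ρ h s * Qstate ρ Q s a ^ 2 := by
            rw [Finset.mul_sum]
            refine Finset.sum_congr rfl fun s _ => ?_
            rw [condSH]
            field_simp
  -- means are equal
  have hmean : pgMean (fun h s a => ρ h s * π h a) (fun h s a => Qstate ρ Q s a • g h a)
      = pgMean (fun h s a => ρ h s * π h a) (fun h _s a => Qhist ρ Q h a • g h a) := by
    unfold pgMean
    refine Finset.sum_congr rfl fun h _ => ?_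
    rw [Finset.sum_comm, Finset.sum_comm (s := Finset.univ) (t := Finset.univ)
      (f := fun s a => (ρ h s * π h a) • (Qhist ρ Q h a • g h a))]
    refine Finset.sum_congr rfl fun a _ => ?_
    simp only [smul_smul, ← Finset.sum_smul]
    congr 1
    have : ∀ c : S → ℝ, (∑ s, ρ h s * π h a * c s) = π h a * ∑ s, ρ h s * c s := by
      intro c; rw [Finset.mul_sum]; refine Finset.sum_congr rfl fun s _ => by ring
    rw [this, this, key1]
  -- second moments
  have hm2 : (∑ h, ∑ s, ∑ a, (ρ h s * π h a) * ‖Qhist ρ Q h a • g h a‖ ^ 2)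
      ≤ ∑ h, ∑ s, ∑ a, (ρ h s * π h a) * ‖Qstate ρ Q s a • g h a‖ ^ 2 := by
    refine Finset.sum_le_sum fun h _ => ?_
    rw [Finset.sum_comm, Finset.sum_comm (s := Finset.univ) (t := Finset.univ)
      (f := fun s a => (ρ h s * π h a) * ‖Qstate ρ Q s a • g h a‖ ^ 2)]
    refine Finset.sum_le_sum fun a _ => ?_
    have hn : ∀ (q : ℝ), ‖q • g h a‖ ^ 2 = q ^ 2 * ‖g h a‖ ^ 2 := by
      intro q; rw [norm_smul, mul_pow, Real.norm_eq_abs, sq_abs]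
    simp only [hn]
    have hrw : ∀ c : S → ℝ, (∑ s, (ρ h s * π h a) * (c s ^ 2 * ‖g h a‖ ^ 2))
        = (π h a * ‖g h a‖ ^ 2) * ∑ s, ρ h s * c s ^ 2 := by
      intro c; rw [Finset.mul_sum]; refine Finset.sum_congr rfl fun s _ => by ring
    rw [hrw (fun s => Qstate ρ Q s a), hrw (fun _ => Qhist ρ Q h a)]
    exact mul_le_mul_of_nonneg_left (key2 h a)
      (mul_nonneg (hπ_nonneg h a) (sq_nonneg _))
  -- conclude
  have : pgVar (fun h s a => ρ h s * π h a) (fun h _s a => Qhist ρ Q h a • g h a)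
      ≤ pgVar (fun h s a => ρ h s * π h a) (fun h s a => Qstate ρ Q s a • g h a) := by
    unfold pgVar
    rw [hmean]
    exact sub_le_sub_right hm2 _
  exact absurd hvar (not_lt.mpr this)
end

section
/- The history-state-based single-sample policy gradient estimate has variance at least that of the history-based estimate, with no unbiasedness hypothesis required: Var[W] ≥ Var[Y], where W(h,s,a) := Q(h,s,a)·g(h,a) and Y(h,s,a) := Q_h(h,a)·g(h,a), and variance is taken with respect to the joint distribution μ(h,s,a) = ρ(h,s)·π(h,a). (This is the variance claim for the history-state-based critic, proved in the paper's Appendix on history-state values.) -/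
open Finset

lemma sum_rho_mul_Q {H S A : Type*} [Fintype S]
    (ρ : H → S → ℝ) (hρ : ∀ h s, 0 ≤ ρ h s) (Q : H → S → A → ℝ) (h : H) (a : A) :
    ∑ s, ρ h s * Q h s a = rhoH ρ h * Qhist ρ Q h a := by
  by_cases hr : rhoH ρ h = 0
  · have hz : ∀ s, ρ h s = 0 := fun s =>
      (Finset.sum_eq_zero_iff_of_nonneg (fun s _ => hρ h s)).1 hr s (Finset.mem_univ s)
    simp [hz, hr]
  · simp only [Qhist, condSH, Finset.mul_sum]
    refine Finset.sum_congr rfl fun s _ => ?_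
    field_simp

lemma jensen_rho {H S A : Type*} [Fintype S]
    (ρ : H → S → ℝ) (hρ : ∀ h s, 0 ≤ ρ h s) (Q : H → S → A → ℝ) (h : H) (a : A) :
    rhoH ρ h * (Qhist ρ Q h a) ^ 2 ≤ ∑ s, ρ h s * (Q h s a) ^ 2 := by
  by_cases hr : rhoH ρ h = 0
  · have hz : ∀ s, ρ h s = 0 := fun s =>
      (Finset.sum_eq_zero_iff_of_nonneg (fun s _ => hρ h s)).1 hr s (Finset.mem_univ s)
    simp [hz, hr]
  · have hrpos : 0 < rhoH ρ h :=
      lt_of_le_of_ne (Finset.sum_nonneg (fun s _ => hρ h s)) (Ne.symm hr)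
    have cauchy : (∑ s, ρ h s * Q h s a) ^ 2 ≤
        (∑ s, ρ h s) * ∑ s, ρ h s * (Q h s a) ^ 2 :=
      Finset.sum_sq_le_sum_mul_sum_of_sq_eq_mul _
        (fun s _ => hρ h s)
        (fun s _ => mul_nonneg (hρ h s) (sq_nonneg _))
        (fun s _ => by ring)
    rw [sum_rho_mul_Q ρ hρ Q h a] at cauchy
    have : rhoH ρ h * ((rhoH ρ h) * (Qhist ρ Q h a) ^ 2) ≤
        rhoH ρ h * (∑ s, ρ h s * (Q h s a) ^ 2) := by
      calc rhoH ρ h * ((rhoH ρ h) * (Qhist ρ Q h a) ^ 2)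
          = (rhoH ρ h * Qhist ρ Q h a) ^ 2 := by ring
        _ ≤ (∑ s, ρ h s) * ∑ s, ρ h s * (Q h s a) ^ 2 := cauchy
        _ = rhoH ρ h * (∑ s, ρ h s * (Q h s a) ^ 2) := rfl
    exact le_of_mul_le_mul_left this hrpos

/-- **Variance of the history-state-based critic.** The history-state-based
single-sample policy gradient estimate `W(h,s,a) = Q(h,s,a)·g(h,a)` has variance at
least that of the history-based estimate `Y(h,s,a) = Q_h(h,a)·g(h,a)`, with no
unbiasedness hypothesis required. -/
theorem history_state_gradient_variance_ge
    {H S A : Type*} [Fintype H] [Fintype S] [Fintype A]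
    [Nonempty H] [Nonempty S] [Nonempty A]
    (ρ : H → S → ℝ) (hρ_nonneg : ∀ h s, 0 ≤ ρ h s)
    (hρ_sum : ∑ h, ∑ s, ρ h s = 1)
    (Q : H → S → A → ℝ)
    (π : H → A → ℝ) (hπ_nonneg : ∀ h a, 0 ≤ π h a)
    (hπ_sum : ∀ h, ∑ a, π h a = 1)
    (d : ℕ) (g : H → A → EuclideanSpace ℝ (Fin d)) :
    pgVar (fun h s a => ρ h s * π h a)
        (fun h _s a => Qhist ρ Q h a • g h a) ≤
      pgVar (fun h s a => ρ h s * π h a)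
        (fun h s a => Q h s a • g h a) := by
  have hmean : pgMean (fun h s a => ρ h s * π h a) (fun h _s a => Qhist ρ Q h a • g h a)
      = pgMean (fun h s a => ρ h s * π h a) (fun h s a => Q h s a • g h a) := by
    unfold pgMean
    refine Finset.sum_congr rfl fun h _ => ?_
    rw [Finset.sum_comm]
    conv_rhs => rw [Finset.sum_comm]
    refine Finset.sum_congr rfl fun a _ => ?_
    simp only [smul_smul]
    rw [← Finset.sum_smul, ← Finset.sum_smul]
    congr 1
    have h1 : ∑ s, ρ h s * π h a * Qhist ρ Q h a = (rhoH ρ h * Qhist ρ Q h a) * π h a := by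
      rw [rhoH, Finset.sum_mul, Finset.sum_mul]
      exact Finset.sum_congr rfl fun s _ => by ring
    have h2 : ∑ s, ρ h s * π h a * Q h s a = (rhoH ρ h * Qhist ρ Q h a) * π h a := by
      rw [← sum_rho_mul_Q ρ hρ_nonneg Q h a, Finset.sum_mul]
      exact Finset.sum_congr rfl fun s _ => by ring
    rw [h1, h2]
  unfold pgVar
  rw [hmean]
  apply sub_le_sub_right
  refine Finset.sum_le_sum fun h _ => ?_
  rw [Finset.sum_comm]
  conv_rhs => rw [Finset.sum_comm]
  refine Finset.sum_le_sum fun a _ => ?_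
  have key := jensen_rho ρ hρ_nonneg Q h a
  calc ∑ s, (ρ h s * π h a) * ‖Qhist ρ Q h a • g h a‖ ^ 2
      = (rhoH ρ h * (Qhist ρ Q h a) ^ 2) * (π h a * ‖g h a‖ ^ 2) := by
        rw [rhoH, Finset.sum_mul, Finset.sum_mul]
        refine Finset.sum_congr rfl fun s _ => ?_
        simp only [norm_smul, mul_pow, Real.norm_eq_abs, sq_abs]
        ring
    _ ≤ (∑ s, ρ h s * (Q h s a) ^ 2) * (π h a * ‖g h a‖ ^ 2) := by
        gcongr
        exact mul_nonneg (hπ_nonneg h a) (sq_nonneg _)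
    _ = ∑ s, (ρ h s * π h a) * ‖Q h s a • g h a‖ ^ 2 := by
        rw [Finset.sum_mul]
        refine Finset.sum_congr rfl fun s _ => ?_
        simp only [norm_smul, mul_pow, Real.norm_eq_abs, sq_abs]
        ring
end

section
/- Suppose the observation model is deterministic in the sense that each state that occurs with positive probability is associated with a unique history: there exists a function φ : S → H such that ρ(h,s) > 0 implies h = φ(s). Then the state value function is an unbiased estimator of the history value function: for every joint history h with ρ(h) > 0 and every joint action a, ∑_s ρ(s|h)·Q_s(s,a) = Q_h(h,a). -/
open Finset

/-- **Deterministic observation model implies unbiased state values.** If each state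
that occurs with positive probability is associated with a unique history (there is
`φ : S → H` with `ρ(h,s) > 0 → h = φ(s)`), then for every joint history `h` with
`ρ(h) > 0` and every joint action `a`, the expected state value equals the history
value: `∑ₛ ρ(s|h)·Q_s(s,a) = Q_h(h,a)`. -/
theorem deterministic_observation_unbiased
    {H S A : Type*} [Fintype H] [Fintype S] [Fintype A]
    [Nonempty H] [Nonempty S] [Nonempty A]
    (ρ : H → S → ℝ) (hρ_nonneg : ∀ h s, 0 ≤ ρ h s)
    (hρ_sum : ∑ h, ∑ s, ρ h s = 1)
    (Q : H → S → A → ℝ)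
    (hdet : ∃ φ : S → H, ∀ h s, 0 < ρ h s → h = φ s) :
    ∀ h : H, 0 < rhoH ρ h → ∀ a : A,
      (∑ s, condSH ρ s h * Qstate ρ Q s a) = Qhist ρ Q h a := by
  obtain ⟨φ, hφ⟩ := hdet
  intro h hh a
  unfold Qhist
  apply Finset.sum_congr rfl
  intro s _
  rcases eq_or_lt_of_le (hρ_nonneg h s) with h0 | hpos
  · simp [condSH, ← h0]
  · -- ρ h s > 0, so h = φ s and ρ(s) = ρ h s
    have hfix : ∀ h', ρ h' s ≠ 0 → h' = h := by
      intro h' hne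
      rw [hφ h' s (lt_of_le_of_ne (hρ_nonneg h' s) (Ne.symm hne)),
        ← hφ h s hpos]
    have hS : rhoS ρ s = ρ h s := by
      unfold rhoS
      rw [Finset.sum_eq_single h]
      · intro h' _ hne
        by_contra hc
        exact hne (hfix h' hc)
      · intro hmem; exact absurd (Finset.mem_univ h) hmem
    have hQs : Qstate ρ Q s a = Q h s a := by
      unfold Qstate
      rw [Finset.sum_eq_single h]
      · rw [condHS, hS, div_self hpos.ne', one_mul]
      · intro h' _ hne
        have : ρ h' s = 0 := by
          by_contra hc; exact hne (hfix h' hc)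
        simp [condHS, this]
      · intro hmem; exact absurd (Finset.mem_univ h) hmem
    rw [hQs]
end
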